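/- arXiv:0802.1642 — 4 statements merged into one kernel-verified Lean document; each statement's English description precedes it below -/
import Mathlib

section
/- Let M be a globally hyperbolic spacetime, P ⊆ M a past compact subset (i.e. J⁻(x) ∩ P is contained in a compact set for every x ∈ M), and K ⊆ M compact. Then J⁻(K) ∩ P is contained in a compact set. -/
/-!
The sets `I⁻(y)`, `y ∈ Σ`, are open and cover `K`, so finitely many `I⁻(y₁), …, I⁻(yₙ)` do.
For `k ≪ y` we have `J⁻(k) ⊆ cl I⁻(k) ⊆ cl I⁻(y) ⊆ J⁻(y)`, hence `J⁻(K) ∩ P` lies in the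
finite union of the sets `J⁻(yᵢ) ∩ P`, each of which lies in a compact set.
-/

/-- Abstract causal structure of a (globally hyperbolic) spacetime:
`ll` is the chronological relation `x ≪ y`, `le` the causal relation. -/
structure Spacetime (M : Type*) where
  ll : M → M → Prop
  le : M → M → Prop

namespace Spacetime

variable {M : Type*}

/-- Chronological past `I⁻(A)`. -/
def Iminus (S : Spacetime M) (A : Set M) : Set M := {x | ∃ y ∈ A, S.ll x y}

/-- Causal past `J⁻(A)`. -/
def Jminus (S : Spacetime M) (A : Set M) : Set M := {x | ∃ y ∈ A, S.le x y}

end Spacetime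

namespace Spacetime

variable {M : Type*} (S : Spacetime M)

theorem Iminus_eq_biUnion (A : Set M) : S.Iminus A = ⋃ y ∈ A, S.Iminus {y} := by
  ext x
  simp [Iminus]

theorem Iminus_subset_Jminus (hllle : ∀ x y, S.ll x y → S.le x y) (A : Set M) :
    S.Iminus A ⊆ S.Jminus A :=
  fun x ⟨y, hy, hxy⟩ => ⟨y, hy, hllle x y hxy⟩

theorem Iminus_singleton_subset_of_ll (hlltrans : ∀ x y z, S.ll x y → S.ll y z → S.ll x z)
    {k y : M} (hky : S.ll k y) : S.Iminus {k} ⊆ S.Iminus {y} := by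
  rintro x ⟨_, rfl, hxk⟩
  exact ⟨y, rfl, hlltrans x _ y hxk hky⟩

variable [TopologicalSpace M]

theorem Jminus_singleton_subset_of_ll (hllle : ∀ x y, S.ll x y → S.le x y)
    (hlltrans : ∀ x y z, S.ll x y → S.ll y z → S.ll x z)
    (hJclosed : ∀ y : M, IsClosed (S.Jminus {y}))
    (hJclI : ∀ A : Set M, S.Jminus A ⊆ closure (S.Iminus A))
    {k y : M} (hky : S.ll k y) : S.Jminus {k} ⊆ S.Jminus {y} :=
  calc S.Jminus {k} ⊆ closure (S.Iminus {k}) := hJclI {k}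
    _ ⊆ closure (S.Iminus {y}) := closure_mono (S.Iminus_singleton_subset_of_ll hlltrans hky)
    _ ⊆ S.Jminus {y} := (hJclosed y).closure_subset_iff.2 (S.Iminus_subset_Jminus hllle {y})

theorem Jminus_subset_biUnion_of_subset_biUnion_Iminus (hllle : ∀ x y, S.ll x y → S.le x y)
    (hlltrans : ∀ x y z, S.ll x y → S.ll y z → S.ll x z)
    (hJclosed : ∀ y : M, IsClosed (S.Jminus {y}))
    (hJclI : ∀ A : Set M, S.Jminus A ⊆ closure (S.Iminus A))
    {K T : Set M} (hKT : K ⊆ ⋃ y ∈ T, S.Iminus {y}) :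
    S.Jminus K ⊆ ⋃ y ∈ T, S.Jminus {y} := by
  rintro x ⟨k, hk, hxk⟩
  obtain ⟨y, hy, hky⟩ := Set.mem_iUnion₂.1 (hKT hk)
  obtain ⟨_, rfl, hky⟩ := hky
  exact Set.mem_biUnion hy
    (S.Jminus_singleton_subset_of_ll hllle hlltrans hJclosed hJclI hky ⟨k, rfl, hxk⟩)

end Spacetime

/-- In a globally hyperbolic spacetime (encoded by the listed
properties of the chronological and causal pasts), if `P` is past compact
(`J⁻(x) ∩ P` is contained in a compact set for every `x`) and `K` is compact,
then `J⁻(K) ∩ P` is contained in a compact set. -/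
theorem timeslice_stmt0 {M : Type*} [TopologicalSpace M] (S : Spacetime M)
    (hllle : ∀ x y, S.ll x y → S.le x y)
    (hlltrans : ∀ x y z, S.ll x y → S.ll y z → S.ll x z)
    (hIopen : ∀ y : M, IsOpen (S.Iminus {y}))
    (hJclosed : ∀ y : M, IsClosed (S.Jminus {y}))
    (hJclI : ∀ A : Set M, S.Jminus A ⊆ closure (S.Iminus A))
    (hCauchy : ∀ K : Set M, IsCompact K → ∃ Sig : Set M, K ⊆ S.Iminus Sig)
    (P K : Set M)
    (hP : ∀ x : M, ∃ C : Set M, IsCompact C ∧ S.Jminus {x} ∩ P ⊆ C)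
    (hK : IsCompact K) :
    ∃ C : Set M, IsCompact C ∧ S.Jminus K ∩ P ⊆ C := by
  obtain ⟨Sig, hSig⟩ := hCauchy K hK
  obtain ⟨T, -, hT, hKT⟩ := hK.elim_finite_subcover_image (fun y _ => hIopen y)
    (hSig.trans (S.Iminus_eq_biUnion Sig).subset)
  choose C hC hPC using hP
  refine ⟨⋃ y ∈ T, C y, hT.isCompact_biUnion fun y _ => hC y, ?_⟩
  rintro x ⟨hxK, hxP⟩
  obtain ⟨y, hy, hxy⟩ := Set.mem_iUnion₂.1
    (S.Jminus_subset_biUnion_of_subset_biUnion_Iminus hllle hlltrans hJclosed hJclI hKT hxK)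
  exact Set.mem_biUnion hy (hPC y ⟨hxy, hxP⟩)
end

section
/- Let S : D → G be a map from an additive monoid of test functions D into a group G satisfying S(0) = 1 and the causal factorization property: S(f + g + h) = S(f + g)·S(g)⁻¹·S(g + h) whenever supp f is causally later than supp h. Define the relative S-matrix S_g(f) := S(g)⁻¹ S(g + f). Then S_g also satisfies causal factorization: S_g(f + g' + h) = S_g(f + g')·S_g(g')⁻¹·S_g(g' + h) whenever supp f is causally later than supp h. -/
theorem timeslice_stmt4_general {D G : Type*} [AddCommMonoid D] [Group G]
    (S : D → G) (later : D → D → Prop)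
    (hfact : ∀ f g h : D, later f h → S (f + g + h) = S (f + g) * (S g)⁻¹ * S (g + h))
    (g : D) (Sg : D → G) (hSg : ∀ x, Sg x = (S g)⁻¹ * S (g + x))
    (f g' h : D) (hlat : later f h) :
    Sg (f + g' + h) = Sg (f + g') * (Sg g')⁻¹ * Sg (g' + h) := by
  -- Factorize `S` with middle term `g + g'`; the outer factors `S g` then cancel.
  have key := hfact f (g + g') h hlat
  simp only [hSg]
  rw [show g + (f + g' + h) = f + (g + g') + h by abel, show g + (f + g') = f + (g + g') by abel,
    key, add_assoc g g' h]
  group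

/-- Let `S : D → G` satisfy `S 0 = 1` and the causal
factorization property `S(f+g+h) = S(f+g)·S(g)⁻¹·S(g+h)` whenever `supp f` is
causally later than `supp h` (relation `later f h`).  Then the relative
S-matrix `S_g(f) = S(g)⁻¹ S(g+f)` also satisfies causal factorization. -/
theorem timeslice_stmt4 {D G : Type*} [AddCommMonoid D] [Group G]
    (S : D → G) (later : D → D → Prop)
    (hS0 : S 0 = 1)
    (hfact : ∀ f g h : D, later f h → S (f + g + h) = S (f + g) * (S g)⁻¹ * S (g + h))
    (g : D) (Sg : D → G) (hSg : ∀ x, Sg x = (S g)⁻¹ * S (g + x))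
    (f g' h : D) (hlat : later f h) :
    Sg (f + g' + h) = Sg (f + g') * (Sg g')⁻¹ * Sg (g' + h) :=
  timeslice_stmt4_general S later hfact g Sg hSg f g' h hlat
end

section
/- Let S satisfy causal factorization and S(0)=1. If h has support in the past of a Cauchy surface Σ₁ and b₋ has support in the future of Σ₁, then S(b₋)S(h)S(b₋)⁻¹ = S(b₋ + h)S(b₋)⁻¹, and this expression is independent of the choice of b₋ among all functions agreeing with a fixed g₋ on the causal past of supp h. -/
def CausalFactorization {D G : Type*} [Add D] [Group G] (S : D → G) (later : D → D → Prop) :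
    Prop :=
  ∀ f g h : D, later f h → S (f + g + h) = S (f + g) * (S g)⁻¹ * S (g + h)

namespace CausalFactorization

variable {D G : Type*} [AddCommMonoid D] [Group G] {S : D → G} {later : D → D → Prop}

theorem map_add_of_later (hfact : CausalFactorization S later) (hS0 : S 0 = 1) {f h : D}
    (hlater : later f h) : S (f + h) = S f * S h := by
  simpa [hS0] using hfact f 0 h hlater

theorem relative_eq_of_later_diff (hfact : CausalFactorization S later) {h b c : D}
    (hlater : later h c) : S (b + c + h) * (S (b + c))⁻¹ = S (b + h) * (S b)⁻¹ := by
  have hsplit : S (h + b + c) = S (h + b) * (S b)⁻¹ * S (b + c) := hfact h b c hlater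
  rw [show h + b + c = b + c + h by abel, add_comm h b] at hsplit
  rw [hsplit]
  group

end CausalFactorization

theorem timeslice_stmt8_general {D G : Type*} [AddCommMonoid D] [Group G]
    (S : D → G) (later : D → D → Prop)
    (hS0 : S 0 = 1)
    (hfact : ∀ f g h : D, later f h → S (f + g + h) = S (f + g) * (S g)⁻¹ * S (g + h))
    (h b b' c : D) (hbc : b' = b + c)
    (hlat_b : later b h) (hlat_c : later h c) :
    S b * S h * (S b)⁻¹ = S (b + h) * (S b)⁻¹ ∧
      S (b' + h) * (S b')⁻¹ = S (b + h) * (S b)⁻¹ := by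
  subst hbc
  exact ⟨by rw [CausalFactorization.map_add_of_later hfact hS0 hlat_b],
    CausalFactorization.relative_eq_of_later_diff hfact hlat_c⟩

/-- Let `S` satisfy causal factorization and `S 0 = 1`.
If `h` has support in the past of a Cauchy surface `Σ₁` and `b₋` has support
in its future (i.e. `later b₋ h`), then
`S(b₋) S(h) S(b₋)⁻¹ = S(b₋ + h) S(b₋)⁻¹`.  Moreover this expression is
independent of the choice of `b₋` among all functions agreeing with a fixed
`g₋` on the causal past of `supp h`: if `b'` is another such choice, so that
the difference `b' - b` is supported away from the causal past of `supp h`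
(causally separated from `h` by a Cauchy surface, `later h (b' - b)`), then
`S(b' + h) S(b')⁻¹ = S(b + h) S(b)⁻¹`. -/
theorem timeslice_stmt8 {D G : Type*} [AddCommMonoid D] [Group G]
    (S : D → G) (later : D → D → Prop)
    (hS0 : S 0 = 1)
    (hfact : ∀ f g h : D, later f h → S (f + g + h) = S (f + g) * (S g)⁻¹ * S (g + h))
    (h b b' c : D) (hbc : b' = b + c)
    (hlat_b : later b h) (hlat_b' : later b' h) (hlat_c : later h c) :
    S b * S h * (S b)⁻¹ = S (b + h) * (S b)⁻¹ ∧
      S (b' + h) * (S b')⁻¹ = S (b + h) * (S b)⁻¹ :=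
  timeslice_stmt8_general S later hS0 hfact h b b' c hbc hlat_b hlat_c
end

section
/- Let K be the Klein–Gordon operator on a globally hyperbolic spacetime M with advanced fundamental solution Δᵃᵛ, and let χ be a smooth function equal to 1 on J⁺(Σ₁) and 0 on J⁻(Σ₀) for Cauchy surfaces Σ₀ in the past of Σ₁. For u a compactly supported distribution (or test function) with support in the future of Σ₁, define g = u − K(χ·Δᵃᵛu). Then g = u modulo the range of K, and g vanishes on the open future of Σ₁ and on the open past of Σ₀. -/
namespace Spacetime

variable {M : Type*}

/-- Chronological future `I⁺(A)`. -/
def Iplus (S : Spacetime M) (A : Set M) : Set M := {x | ∃ y ∈ A, S.ll y x}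

/-- Causal future `J⁺(A)`. -/
def Jplus (S : Spacetime M) (A : Set M) : Set M := {x | ∃ y ∈ A, S.le y x}

end Spacetime

/-- Let `K` be the Klein–Gordon operator with advanced
fundamental solution `Δ` (`K (Δ u) = u`, `supp (Δ u) ⊆ J⁻(supp u)`), `K` local
(`supp (K v) ⊆ supp v`), and let `χm` be multiplication by a smooth `χ` equal
to `1` on `J⁺(Sig1)` and `0` on `J⁻(Sig0)`, where `Sig0` is a Cauchy surface in the
past of `Sig1`.  For `u` supported in the future of `Sig1` and
`g := u − K(χ·Δ u)`, one has `g = u` modulo the range of `K`, and `g`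
vanishes on the open (chronological) future of `Sig1` and on the open past of
`Sig0`. -/
theorem timeslice_stmt9 {M D : Type*} [AddCommGroup D] (Sp : Spacetime M)
    (supp : D → Set M)
    (hsupp_sub : ∀ a b : D, supp (a - b) ⊆ supp a ∪ supp b)
    (K : D →+ D) (Δ : D → D) (χm : D → D)
    (hKΔ : ∀ u : D, K (Δ u) = u)
    (hΔsupp : ∀ u : D, supp (Δ u) ⊆ Sp.Jminus (supp u))
    (hsuppK : ∀ v : D, supp (K v) ⊆ supp v)
    (Sig0 Sig1 : Set M)
    (hχ1 : ∀ v : D, supp (χm v - v) ∩ Sp.Jplus Sig1 = ∅)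
    (hχ0 : ∀ v : D, supp (χm v) ∩ Sp.Jminus Sig0 = ∅)
    (hIJ1 : Sp.Iplus Sig1 ⊆ Sp.Jplus Sig1) (hIJ0 : Sp.Iminus Sig0 ⊆ Sp.Jminus Sig0)
    (hdisj : Sp.Jplus Sig1 ∩ Sp.Iminus Sig0 = ∅)
    (u : D) (hu : supp u ⊆ Sp.Jplus Sig1) :
    (∃ w : D, u - K (χm (Δ u)) = u + K w) ∧
      supp (u - K (χm (Δ u))) ∩ Sp.Iplus Sig1 = ∅ ∧
      supp (u - K (χm (Δ u))) ∩ Sp.Iminus Sig0 = ∅ := by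
  have hzero : ∀ a : D, supp (0 : D) ⊆ supp a := by
    intro a
    have := hsupp_sub a a
    simpa using this
  set v := Δ u with hv
  refine ⟨⟨-(χm v), by rw [map_neg]; abel⟩, ?_, ?_⟩
  · -- future part
    have hg : u - K (χm v) = K (v - χm v) := by
      rw [map_sub, hKΔ]
    have hsub : supp (u - K (χm v)) ⊆ supp (χm v - v) := by
      rw [hg]
      refine (hsuppK _).trans ?_
      have heq : v - χm v = (0 : D) - (χm v - v) := by abel
      rw [heq]
      exact (hsupp_sub _ _).trans (Set.union_subset (hzero _) subset_rfl)
    have := hχ1 v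
    apply Set.eq_empty_of_subset_empty
    intro x hx
    have hx1 : x ∈ supp (χm v - v) := hsub hx.1
    have hx2 : x ∈ Sp.Jplus Sig1 := hIJ1 hx.2
    rw [← this]; exact ⟨hx1, hx2⟩
  · -- past part
    apply Set.eq_empty_of_subset_empty
    intro x hx
    have hx1 := (hsupp_sub u (K (χm v))) hx.1
    rcases hx1 with h | h
    · have : x ∈ Sp.Jplus Sig1 ∩ Sp.Iminus Sig0 := ⟨hu h, hx.2⟩
      rw [hdisj] at this; exact this
    · have hxχ : x ∈ supp (χm v) := hsuppK _ h
      have : x ∈ supp (χm v) ∩ Sp.Jminus Sig0 := ⟨hxχ, hIJ0 hx.2⟩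
      rw [hχ0 v] at this; exact this
end
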